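/- Let Q(x) = (1/√(2π)) ∫_x^∞ exp(−u²/2) du. Let a > 1, ν > 0, and let R be a real number with R > 2·log₂ a and C − R > 2·√(ν·ln a). Then there exists N such that for every integer n ≥ N: Q(√(n/ν)·(C − R)) · (1 + a^(2n)) < 1 and n · (R − 2·log₂ a) > 2. -/

import Mathlib

/-! Completing the square, `exp (-u²/2) ≤ exp (x²/2 - x u)`, bounds the Gaussian tail by
`Q(x) ≤ exp (-x²/2) / x`, hence by `exp (-x²/2)` once `x ≥ 1`. At `x = √(n/ν)·(C - R)` this is
`exp (-n (C - R)²/(2ν))`, while `1 + a^(2n) ≤ 2 exp (2 n ln a)`. The hypothesis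
`C - R > 2√(ν ln a)` is exactly `(C - R)²/(2ν) > 2 ln a`, so the product decays geometrically
in `n`. -/

open MeasureTheory

noncomputable def gaussQ (x : ℝ) : ℝ :=
  (1 / Real.sqrt (2 * Real.pi)) * ∫ u in Set.Ioi x, Real.exp (-u ^ 2 / 2)

open Real Set Filter

lemma integral_Ioi_exp_neg_sq_div_two_le {x : ℝ} (hx : 0 < x) :
    ∫ u in Ioi x, exp (-u ^ 2 / 2) ≤ exp (-x ^ 2 / 2) / x := by
  have hmajorant : IntegrableOn (fun u => exp (x ^ 2 / 2) * exp (-x * u)) (Ioi x) :=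
    (integrableOn_exp_mul_Ioi (neg_neg_of_pos hx) x).const_mul _
  have hgauss : IntegrableOn (fun u : ℝ => exp (-u ^ 2 / 2)) (Ioi x) := by
    simpa [neg_div, div_eq_inv_mul] using
      (integrable_exp_neg_mul_sq (by norm_num : (0 : ℝ) < 1 / 2)).integrableOn (s := Ioi x)
  calc ∫ u in Ioi x, exp (-u ^ 2 / 2)
      ≤ ∫ u in Ioi x, exp (x ^ 2 / 2) * exp (-x * u) := by
        refine setIntegral_mono_on hgauss hmajorant measurableSet_Ioi fun u _ => ?_
        rw [← exp_add, exp_le_exp]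
        nlinarith [sq_nonneg (u - x)]
    _ = exp (-x ^ 2 / 2) / x := by
        rw [integral_const_mul, integral_exp_mul_Ioi (neg_neg_of_pos hx), neg_div_neg_eq,
          mul_div_assoc', ← exp_add]
        ring_nf

lemma gaussQ_nonneg (x : ℝ) : 0 ≤ gaussQ x :=
  mul_nonneg (by positivity) (setIntegral_nonneg measurableSet_Ioi fun u _ => (exp_pos _).le)

lemma gaussQ_le_exp_neg_sq_div_two {x : ℝ} (hx : 1 ≤ x) : gaussQ x ≤ exp (-x ^ 2 / 2) := by
  have hx0 : 0 < x := one_pos.trans_le hx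
  have hsqrt : 1 ≤ sqrt (2 * π) := by
    rw [one_le_sqrt]
    nlinarith [pi_gt_three]
  calc gaussQ x ≤ 1 * (exp (-x ^ 2 / 2) / x) :=
        mul_le_mul (div_le_one_of_le₀ hsqrt (by positivity))
          (integral_Ioi_exp_neg_sq_div_two_le hx0)
          (setIntegral_nonneg measurableSet_Ioi fun u _ => (exp_pos _).le) zero_le_one
    _ ≤ exp (-x ^ 2 / 2) := by
        rw [one_mul]
        exact div_le_self (exp_pos _).le hx

lemma gaussQ_sqrt_mul_le {s D : ℝ} (h : 1 ≤ sqrt s * D) :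
    gaussQ (sqrt s * D) ≤ exp (-(s * D ^ 2) / 2) := by
  have hs : 0 ≤ s := by
    by_contra! hs
    rw [sqrt_eq_zero_of_nonpos hs.le, zero_mul] at h
    linarith
  simpa [mul_pow, sq_sqrt hs] using gaussQ_le_exp_neg_sq_div_two h

lemma tendsto_sqrt_natCast_div_mul_atTop {ν D : ℝ} (hν : 0 < ν) (hD : 0 < D) :
    Tendsto (fun n : ℕ => sqrt ((n : ℝ) / ν) * D) atTop atTop :=
  (tendsto_sqrt_atTop.comp
    (tendsto_natCast_atTop_atTop.atTop_div_const hν)).atTop_mul_const hD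

lemma tendsto_const_mul_exp_neg_natCast_mul {δ : ℝ} (hδ : 0 < δ) (c : ℝ) :
    Tendsto (fun n : ℕ => c * exp (-((n : ℝ) * δ))) atTop (nhds 0) := by
  simpa using (tendsto_exp_atBot.comp
    (tendsto_neg_atTop_atBot.comp
      (tendsto_natCast_atTop_atTop.atTop_mul_const hδ))).const_mul c

theorem stmt_14 (a ν C R : ℝ) (ha : 1 < a) (hν : 0 < ν)
    (hR : R > 2 * Real.logb 2 a) (hCR : C - R > 2 * Real.sqrt (ν * Real.log a)) :
    ∃ N : ℕ, ∀ n : ℕ, N ≤ n →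
      gaussQ (Real.sqrt ((n : ℝ) / ν) * (C - R)) * (1 + a ^ (2 * n)) < 1 ∧
      (n : ℝ) * (R - 2 * Real.logb 2 a) > 2 := by
  set D := C - R
  have hlog : 0 < log a := log_pos ha
  have hD : 0 < D := lt_of_le_of_lt (by positivity) hCR
  have hδ : 0 < D ^ 2 / (2 * ν) - 2 * log a := by
    have hsq : 4 * (ν * log a) < D ^ 2 := by
      nlinarith [sq_sqrt (by positivity : 0 ≤ ν * log a), sqrt_nonneg (ν * log a)]
    rw [sub_pos, lt_div_iff₀ (by positivity)]
    linarith
  have hQ : ∀ᶠ n : ℕ in atTop, gaussQ (sqrt ((n : ℝ) / ν) * D) * (1 + a ^ (2 * n)) < 1 := by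
    filter_upwards [(tendsto_sqrt_natCast_div_mul_atTop hν hD).eventually_ge_atTop 1,
      (tendsto_const_mul_exp_neg_natCast_mul hδ 2).eventually_lt_const one_pos] with n hx hsmall
    have hpow : a ^ (2 * n) = exp (2 * n * log a) := by
      rw [← rpow_natCast, rpow_def_of_pos (by linarith)]
      push_cast
      ring_nf
    calc gaussQ (sqrt ((n : ℝ) / ν) * D) * (1 + a ^ (2 * n))
        ≤ exp (-((n : ℝ) / ν * D ^ 2) / 2) * (2 * exp (2 * n * log a)) := by
          refine mul_le_mul (gaussQ_sqrt_mul_le hx) ?_ (by positivity) (exp_pos _).le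
          rw [← hpow]
          linarith [one_le_pow₀ (n := 2 * n) ha.le]
      _ = 2 * exp (-((n : ℝ) * (D ^ 2 / (2 * ν) - 2 * log a))) := by
          rw [mul_left_comm, ← exp_add]
          field_simp
          ring_nf
      _ < 1 := hsmall
  have hrate : ∀ᶠ n : ℕ in atTop, (n : ℝ) * (R - 2 * logb 2 a) > 2 :=
    (tendsto_natCast_atTop_atTop.atTop_mul_const (sub_pos.mpr hR)).eventually_gt_atTop 2
  exact eventually_atTop.mp (hQ.and hrate)
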